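/- Let q, a, b, c, d, x ∈ ℂ with 0 < |q| < 1 and x ≠ 0. Assume 1 - c q^j x ≠ 0 and 1 - d q^j x ≠ 0 for all j ≥ 0, and 1 - a q^j x ≠ 0 and 1 - b q^j x ≠ 0 for 0 ≤ j ≤ k - 1. Then the k-th iterate of the q-differential operator applied to t ↦ (a t;q)_∞ (b t;q)_∞ / ((c t;q)_∞ (d t;q)_∞), evaluated at x, equals ((a x;q)_∞ (b x;q)_∞/((c x;q)_∞ (d x;q)_∞)) · ∑_{i=0}^{k} [k choose i]_q q^{C(i,2)} ((c x;q)_i (d x;q)_i/(b x;q)_i) · ( ∑_{j=0}^{i} [i choose j]_q q^{j(j-i)} (-a)^j (-b)^{i-j} / (a x;q)_j ) · ( ∑_{l=0}^{k-i} [k-i choose l]_q (d q^i x;q)_l c^l d^{k-i-l} ). -/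

import Mathlib

/-- The finite q-shifted factorial (a;q)_n = ∏_{j=0}^{n-1} (1 - a q^j). -/
noncomputable def qPoch (q a : ℂ) (n : ℕ) : ℂ :=
  ∏ j ∈ Finset.range n, (1 - a * q ^ j)

/-- The infinite q-shifted factorial (a;q)_∞ = ∏_{j=0}^{∞} (1 - a q^j). -/
noncomputable def qPochInf (q a : ℂ) : ℂ :=
  ∏' j : ℕ, (1 - a * q ^ j)

/-- The q-binomial coefficient [n choose k]_q = (q;q)_n / ((q;q)_k (q;q)_{n-k}). -/
noncomputable def qBinom (q : ℂ) (n k : ℕ) : ℂ :=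
  qPoch q q n / (qPoch q q k * qPoch q q (n - k))

/-- The q-differential operator: (D_q f)(x) = (f(x) - f(qx))/x. -/
noncomputable def Dq (q : ℂ) (f : ℂ → ℂ) : ℂ → ℂ :=
  fun x => (f x - f (q * x)) / x

/-! The function is the product of `(a t;q)_∞ (b t;q)_∞` and `(c t;q)_∞⁻¹ (d t;q)_∞⁻¹`. The
q-Leibniz rule `D_q^n (f g)(x) = ∑ [n choose i]_q (D_q^i f)(x) (D_q^(n-i) g)(q^i x)`, applied to
this product and again to each of the two factors, reduces everything to the elementary rules
`D_q (a t;q)_∞ = -a (a q t;q)_∞` and `D_q (c t;q)_∞⁻¹ = c (c t;q)_∞⁻¹`, both consequences of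
`(u;q)_∞ = (1 - u) (u q;q)_∞`. The shifted products `(u q^n;q)_∞` are then traded for
`(u;q)_∞ / (u;q)_n`, and the powers of `q` combine through
`C(j,2) + C(i-j,2) = C(i,2) - j (i - j)`. -/

open Finset

lemma multipliable_one_sub_mul_pow {q : ℂ} (hq : ‖q‖ < 1) (a : ℂ) :
    Multipliable fun j : ℕ => 1 - a * q ^ j := by
  have hs : Summable fun j : ℕ => ‖-(a * q ^ j)‖ := by
    simpa [norm_pow] using (summable_geometric_of_lt_one (norm_nonneg q) hq).mul_left ‖a‖
  simpa only [sub_eq_add_neg] using multipliable_one_add_of_summable hs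

lemma qPoch_zero (q u : ℂ) : qPoch q u 0 = 1 := prod_range_zero _

lemma qPoch_succ (q u : ℂ) (n : ℕ) : qPoch q u (n + 1) = qPoch q u n * (1 - u * q ^ n) :=
  prod_range_succ _ n

lemma qPoch_add (q u : ℂ) (m n : ℕ) :
    qPoch q u (m + n) = qPoch q u m * qPoch q (u * q ^ m) n := by
  simp only [qPoch, prod_range_add, pow_add, mul_assoc]

lemma qPoch_dvd_qPoch (q u : ℂ) {m n : ℕ} (h : m ≤ n) : qPoch q u m ∣ qPoch q u n :=
  prod_dvd_prod_of_subset _ _ _ (range_subset_range.2 h)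

lemma qPoch_ne_zero {q u : ℂ} {n : ℕ} (h : ∀ j < n, 1 - u * q ^ j ≠ 0) : qPoch q u n ≠ 0 :=
  prod_ne_zero_iff.2 fun j hj => h j (mem_range.1 hj)

lemma qPoch_self_ne_zero {q : ℂ} (hq : ‖q‖ < 1) (n : ℕ) : qPoch q q n ≠ 0 := by
  refine qPoch_ne_zero fun j _ h => ?_
  have hnorm : ‖q‖ ^ (j + 1) = 1 := by
    rw [← norm_pow, pow_succ', ← sub_eq_zero.1 h, norm_one]
  exact (pow_lt_one₀ (norm_nonneg q) hq j.succ_ne_zero).ne hnorm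

lemma qPoch_mul_qPochInf {q : ℂ} (hq : ‖q‖ < 1) (u : ℂ) (n : ℕ) :
    qPoch q u n * qPochInf q (u * q ^ n) = qPochInf q u := by
  have h : Multipliable fun j : ℕ => 1 - u * q ^ (j + n) :=
    (multipliable_one_sub_mul_pow hq (u * q ^ n)).congr fun j => by ring
  have e : qPochInf q (u * q ^ n) = ∏' j : ℕ, (1 - u * q ^ (j + n)) :=
    tprod_congr fun j => by ring
  rw [e]
  exact Multipliable.prod_mul_tprod_nat_mul' (f := fun j => 1 - u * q ^ j) h

lemma qPochInf_eq_one_sub_mul {q : ℂ} (hq : ‖q‖ < 1) (u : ℂ) :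
    qPochInf q u = (1 - u) * qPochInf q (u * q) := by
  simpa [qPoch] using (qPoch_mul_qPochInf hq u 1).symm

lemma qPochInf_mul_pow {q u : ℂ} (hq : ‖q‖ < 1) {n : ℕ} (h : qPoch q u n ≠ 0) :
    qPochInf q (u * q ^ n) = qPochInf q u / qPoch q u n := by
  rw [← qPoch_mul_qPochInf hq u n, mul_div_cancel_left₀ _ h]

lemma inv_qPochInf_mul_pow {q u : ℂ} (hq : ‖q‖ < 1) {n : ℕ} (h : qPoch q u n ≠ 0) :
    (qPochInf q (u * q ^ n))⁻¹ = qPoch q u n * (qPochInf q u)⁻¹ := by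
  rw [qPochInf_mul_pow hq h, inv_div, div_eq_mul_inv]

lemma inv_qPochInf_sub_inv_qPochInf_mul {q u : ℂ} (hq : ‖q‖ < 1) (hu : 1 - u ≠ 0) :
    (qPochInf q u)⁻¹ - (qPochInf q (u * q))⁻¹ = u * (qPochInf q u)⁻¹ := by
  rw [qPochInf_eq_one_sub_mul hq u, mul_inv]
  linear_combination (qPochInf q (u * q))⁻¹ * inv_mul_cancel₀ hu

section qBinom

variable {q : ℂ} (hq : ∀ n, qPoch q q n ≠ 0)
include hq

lemma qBinom_zero_right (n : ℕ) : qBinom q n 0 = 1 := by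
  rw [qBinom, Nat.sub_zero, qPoch_zero, one_mul, div_self (hq n)]

lemma qBinom_self (n : ℕ) : qBinom q n n = 1 := by
  rw [qBinom, Nat.sub_self, qPoch_zero, mul_one, div_self (hq n)]

lemma qBinom_succ_succ {n i : ℕ} (h : i < n) :
    qBinom q (n + 1) (i + 1) = q ^ (i + 1) * qBinom q n (i + 1) + qBinom q n i := by
  obtain ⟨m, rfl⟩ := Nat.exists_eq_add_of_lt h
  have e1 : i + m + 1 - (i + 1) = m := by omega
  have e2 : i + m + 1 - i = m + 1 := by omega
  have e3 : i + m + 1 + 1 - (i + 1) = m + 1 := by omega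
  rw [qBinom, qBinom, qBinom, e1, e2, e3, qPoch_succ q q (i + m + 1), qPoch_succ q q m,
    qPoch_succ q q i]
  have hi := hq i
  have hm := hq m
  have hn := hq (i + m + 1)
  have hi' := hq (i + 1)
  have hm' := hq (m + 1)
  rw [qPoch_succ] at hi' hm'
  have hqi := right_ne_zero_of_mul hi'
  have hqm := right_ne_zero_of_mul hm'
  field_simp
  ring

lemma sum_qBinom_pascal (T : ℕ → ℕ → ℂ) (n : ℕ) :
    ∑ i ∈ range (n + 1), q ^ i * qBinom q n i * T i (n + 1 - i) +
        ∑ i ∈ range (n + 1), qBinom q n i * T (i + 1) (n - i) =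
      ∑ i ∈ range (n + 2), qBinom q (n + 1) i * T i (n + 1 - i) := by
  have hmid : ∀ i ∈ range n, qBinom q (n + 1) (i + 1) * T (i + 1) (n - i) =
      q ^ (i + 1) * qBinom q n (i + 1) * T (i + 1) (n - i) + qBinom q n i * T (i + 1) (n - i) :=
    fun i hi => by rw [qBinom_succ_succ hq (mem_range.1 hi)]; ring
  conv_rhs => rw [sum_range_succ', sum_range_succ]
  rw [sum_range_succ', sum_range_succ]
  simp only [Nat.add_sub_add_right, sum_congr rfl hmid, sum_add_distrib, qBinom_zero_right hq,
    qBinom_self hq]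
  ring

end qBinom

lemma Nat.add_choose_two (m n : ℕ) : (m + n).choose 2 = m.choose 2 + n.choose 2 + m * n := by
  apply Nat.cast_injective (R := ℚ)
  push_cast [Nat.cast_choose_two]
  ring

lemma pow_choose_two_mul_pow_choose_two_sub {K : Type*} [Field K] {q : K} (hq : q ≠ 0)
    {i j : ℕ} (h : j ≤ i) :
    q ^ j.choose 2 * q ^ (i - j).choose 2 =
      q ^ i.choose 2 * q ^ ((j : ℤ) * ((j : ℤ) - (i : ℤ))) := by
  obtain ⟨m, rfl⟩ := Nat.exists_eq_add_of_le h
  have hexp : (j : ℤ) * (j - (j + m : ℕ)) = -(j * m : ℕ) := by push_cast; ring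
  rw [Nat.add_sub_cancel_left, Nat.add_choose_two, hexp, zpow_neg, zpow_natCast, pow_add,
    pow_add]
  field_simp

lemma iterate_Dq_apply_sub (q : ℂ) (f : ℂ → ℂ) (n : ℕ) (y : ℂ) :
    (Dq q)^[n] f y - (Dq q)^[n] f (q * y) = y * (Dq q)^[n + 1] f y := by
  rw [Function.iterate_succ_apply']
  rcases eq_or_ne y 0 with rfl | hy
  · simp
  · exact (mul_div_cancel₀ _ hy).symm

lemma iterate_Dq_succ_apply_zero (q : ℂ) (f : ℂ → ℂ) (n : ℕ) : (Dq q)^[n + 1] f 0 = 0 := by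
  rw [Function.iterate_succ_apply']
  simp [Dq]

section Dq

variable {q : ℂ}

theorem iterate_Dq_mul_apply (hq : ∀ n, qPoch q q n ≠ 0) (f g : ℂ → ℂ) (n : ℕ) (x : ℂ) :
    (Dq q)^[n] (fun t => f t * g t) x =
      ∑ i ∈ range (n + 1), qBinom q n i * (Dq q)^[i] f x * (Dq q)^[n - i] g (q ^ i * x) := by
  induction n generalizing x with
  | zero => simp [qBinom_zero_right hq]
  | succ n ih =>
    rcases eq_or_ne x 0 with rfl | hx
    -- both sides vanish, `Dq` dividing by `0` at the origin
    · rw [iterate_Dq_succ_apply_zero]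
      refine (sum_eq_zero fun i _ => ?_).symm
      cases i <;> simp [iterate_Dq_succ_apply_zero]
    apply mul_left_cancel₀ hx
    have hterm : ∀ i ∈ range (n + 1),
        qBinom q n i * (Dq q)^[i] f x * (Dq q)^[n - i] g (q ^ i * x) -
          qBinom q n i * (Dq q)^[i] f (q * x) * (Dq q)^[n - i] g (q ^ i * (q * x)) =
        x * (q ^ i * qBinom q n i * ((Dq q)^[i] f x * (Dq q)^[n + 1 - i] g (q ^ i * x)) +
          qBinom q n i * ((Dq q)^[i + 1] f x * (Dq q)^[n - i] g (q ^ (i + 1) * x))) := by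
      intro i hi
      have hf := iterate_Dq_apply_sub q f i x
      have hg := iterate_Dq_apply_sub q g (n - i) (q ^ i * x)
      rw [← Nat.sub_add_comm (Nat.lt_succ_iff.1 (mem_range.1 hi))] at hg
      rw [show q ^ i * (q * x) = q * (q ^ i * x) by ring,
        show q ^ (i + 1) * x = q * (q ^ i * x) by ring]
      linear_combination (qBinom q n i * (Dq q)^[i] f x) * hg +
        (qBinom q n i * (Dq q)^[n - i] g (q * (q ^ i * x))) * hf
    rw [← iterate_Dq_apply_sub, ih, ih, ← sum_sub_distrib, sum_congr rfl hterm, ← mul_sum,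
      sum_add_distrib,
      sum_qBinom_pascal hq fun i m => (Dq q)^[i] f x * (Dq q)^[m] g (q ^ i * x)]
    simp only [mul_assoc]

lemma iterate_Dq_apply_of_sub_eq (hq : q ≠ 0) {f : ℂ → ℂ} {μ : ℂ}
    (hf : ∀ y, f y - f (q * y) = μ * y * f (q * y)) (k : ℕ) {x : ℂ} (hx : x ≠ 0) :
    (Dq q)^[k] f x = μ ^ k * q ^ k.choose 2 * f (q ^ k * x) := by
  induction k generalizing x with
  | zero => simp
  | succ k ih =>
    have hstep := hf (q ^ k * x)
    rw [show q * (q ^ k * x) = q ^ (k + 1) * x by ring] at hstep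
    rw [Function.iterate_succ_apply', Dq, ih hx, ih (mul_ne_zero hq hx), Nat.choose_succ_succ,
      Nat.choose_one_right, div_eq_iff hx, show q ^ k * (q * x) = q ^ (k + 1) * x by ring]
    linear_combination μ ^ k * q ^ k.choose 2 * hstep

lemma iterate_Dq_apply_of_Dq_eq_mul {f : ℂ → ℂ} {μ x : ℂ}
    (hf : ∀ j : ℕ, Dq q f (q ^ j * x) = μ * f (q ^ j * x)) (k j : ℕ) :
    (Dq q)^[k] f (q ^ j * x) = μ ^ k * f (q ^ j * x) := by
  induction k generalizing j with
  | zero => simp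
  | succ k ih =>
    have hqj : q * (q ^ j * x) = q ^ (j + 1) * x := by ring
    rw [Function.iterate_succ_apply', Dq, hqj, ih, ih, ← mul_sub, mul_div_assoc, ← hqj,
      ← Dq, hf, pow_succ, mul_assoc]

end Dq

section qPochInfFactors

variable {q : ℂ} (hq0 : q ≠ 0) (hq1 : ‖q‖ < 1)
include hq0 hq1

lemma iterate_Dq_qPochInf_apply (a : ℂ) (k : ℕ) {x : ℂ} (hx : x ≠ 0) :
    (Dq q)^[k] (fun t => qPochInf q (a * t)) x =
      (-a) ^ k * q ^ k.choose 2 * qPochInf q (a * (q ^ k * x)) := by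
  refine iterate_Dq_apply_of_sub_eq hq0 (fun y => ?_) k hx
  rw [qPochInf_eq_one_sub_mul hq1 (a * y), show a * (q * y) = a * y * q by ring]
  ring

lemma iterate_Dq_inv_qPochInf_apply {c x : ℂ} (hx : x ≠ 0)
    (hc : ∀ j : ℕ, 1 - c * x * q ^ j ≠ 0) (k j : ℕ) :
    (Dq q)^[k] (fun t => (qPochInf q (c * t))⁻¹) (q ^ j * x) =
      c ^ k * (qPochInf q (c * (q ^ j * x)))⁻¹ := by
  refine iterate_Dq_apply_of_Dq_eq_mul (fun j => ?_) k j
  have hy : q ^ j * x ≠ 0 := mul_ne_zero (pow_ne_zero j hq0) hx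
  have hcj : 1 - c * (q ^ j * x) ≠ 0 := by rw [← mul_assoc, mul_right_comm]; exact hc j
  rw [Dq, show c * (q * (q ^ j * x)) = c * (q ^ j * x) * q by ring,
    inv_qPochInf_sub_inv_qPochInf_mul hq1 hcj, div_eq_iff hy]
  ring

lemma iterate_Dq_qPochInf_mul_qPochInf_apply (a b : ℂ) (i : ℕ) {x : ℂ} (hx : x ≠ 0)
    (ha : qPoch q (a * x) i ≠ 0) (hb : qPoch q (b * x) i ≠ 0) :
    (Dq q)^[i] (fun t => qPochInf q (a * t) * qPochInf q (b * t)) x =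
      qPochInf q (a * x) * qPochInf q (b * x) * q ^ i.choose 2 / qPoch q (b * x) i *
        ∑ j ∈ range (i + 1), qBinom q i j * q ^ ((j : ℤ) * ((j : ℤ) - (i : ℤ))) *
          (-a) ^ j * (-b) ^ (i - j) / qPoch q (a * x) j := by
  rw [iterate_Dq_mul_apply (qPoch_self_ne_zero hq1), mul_sum]
  refine sum_congr rfl fun j hj => ?_
  have hji : j ≤ i := Nat.lt_succ_iff.1 (mem_range.1 hj)
  have haj : qPoch q (a * x) j ≠ 0 := ne_zero_of_dvd_ne_zero ha (qPoch_dvd_qPoch q _ hji)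
  have hbi : b * (q ^ (i - j) * (q ^ j * x)) = b * x * q ^ i := by
    rw [← pow_sub_mul_pow q hji]
    ring
  rw [iterate_Dq_qPochInf_apply hq0 hq1 a j hx,
    iterate_Dq_qPochInf_apply hq0 hq1 b (i - j) (mul_ne_zero (pow_ne_zero j hq0) hx), hbi,
    show a * (q ^ j * x) = a * x * q ^ j by ring, qPochInf_mul_pow hq1 haj,
    qPochInf_mul_pow hq1 hb]
  have hexp := pow_choose_two_mul_pow_choose_two_sub hq0 hji
  linear_combination (qBinom q i j * (-a) ^ j * (-b) ^ (i - j) * qPochInf q (a * x) *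
    qPochInf q (b * x) / (qPoch q (a * x) j * qPoch q (b * x) i)) * hexp

lemma iterate_Dq_inv_qPochInf_mul_inv_qPochInf_apply {c d x : ℂ} (hx : x ≠ 0)
    (hc : ∀ j : ℕ, 1 - c * x * q ^ j ≠ 0) (hd : ∀ j : ℕ, 1 - d * x * q ^ j ≠ 0) (i m : ℕ) :
    (Dq q)^[m] (fun t => (qPochInf q (c * t))⁻¹ * (qPochInf q (d * t))⁻¹) (q ^ i * x) =
      qPoch q (c * x) i * qPoch q (d * x) i * (qPochInf q (c * x))⁻¹ *
        (qPochInf q (d * x))⁻¹ *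
          ∑ l ∈ range (m + 1), qBinom q m l * qPoch q (d * q ^ i * x) l * c ^ l * d ^ (m - l) := by
  rw [iterate_Dq_mul_apply (qPoch_self_ne_zero hq1), mul_sum]
  refine sum_congr rfl fun l _ => ?_
  rw [iterate_Dq_inv_qPochInf_apply hq0 hq1 hx hc l i,
    show q ^ l * (q ^ i * x) = q ^ (i + l) * x by ring,
    iterate_Dq_inv_qPochInf_apply hq0 hq1 hx hd (m - l) (i + l),
    show c * (q ^ i * x) = c * x * q ^ i by ring,
    show d * (q ^ (i + l) * x) = d * x * q ^ (i + l) by ring,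
    inv_qPochInf_mul_pow hq1 (qPoch_ne_zero fun j _ => hc j),
    inv_qPochInf_mul_pow hq1 (qPoch_ne_zero fun j _ => hd j), qPoch_add,
    show d * x * q ^ i = d * q ^ i * x by ring]
  ring

end qPochInfFactors

theorem stmt6 (q a b c d x : ℂ) (hq0 : 0 < ‖q‖) (hq1 : ‖q‖ < 1)
    (hx : x ≠ 0) (k : ℕ)
    (hc : ∀ j : ℕ, 1 - c * q ^ j * x ≠ 0)
    (hd : ∀ j : ℕ, 1 - d * q ^ j * x ≠ 0)
    (ha : ∀ j : ℕ, j < k → 1 - a * q ^ j * x ≠ 0)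
    (hb : ∀ j : ℕ, j < k → 1 - b * q ^ j * x ≠ 0) :
    (Dq q)^[k]
        (fun t => qPochInf q (a * t) * qPochInf q (b * t) /
          (qPochInf q (c * t) * qPochInf q (d * t))) x =
      qPochInf q (a * x) * qPochInf q (b * x) /
          (qPochInf q (c * x) * qPochInf q (d * x)) *
        ∑ i ∈ Finset.range (k + 1),
          qBinom q k i * q ^ (i.choose 2) *
            (qPoch q (c * x) i * qPoch q (d * x) i / qPoch q (b * x) i) *
            (∑ j ∈ Finset.range (i + 1),
              qBinom q i j * q ^ ((j : ℤ) * ((j : ℤ) - (i : ℤ))) * (-a) ^ j * (-b) ^ (i - j) /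
                qPoch q (a * x) j) *
            ∑ l ∈ Finset.range (k - i + 1),
              qBinom q (k - i) l * qPoch q (d * q ^ i * x) l * c ^ l * d ^ (k - i - l) := by
  have hq : q ≠ 0 := norm_pos_iff.1 hq0
  have hc' : ∀ j, 1 - c * x * q ^ j ≠ 0 := fun j => by rw [mul_right_comm]; exact hc j
  have hd' : ∀ j, 1 - d * x * q ^ j ≠ 0 := fun j => by rw [mul_right_comm]; exact hd j
  have ha' : qPoch q (a * x) k ≠ 0 :=
    qPoch_ne_zero fun j hj => by rw [mul_right_comm]; exact ha j hj
  have hb' : qPoch q (b * x) k ≠ 0 :=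
    qPoch_ne_zero fun j hj => by rw [mul_right_comm]; exact hb j hj
  have hsplit : (fun t => qPochInf q (a * t) * qPochInf q (b * t) /
      (qPochInf q (c * t) * qPochInf q (d * t))) = fun t => qPochInf q (a * t) *
        qPochInf q (b * t) * ((qPochInf q (c * t))⁻¹ * (qPochInf q (d * t))⁻¹) := by
    funext t
    rw [div_eq_mul_inv, mul_inv]
  rw [hsplit, iterate_Dq_mul_apply (qPoch_self_ne_zero hq1), mul_sum]
  refine sum_congr rfl fun i hi => ?_
  have hik : i ≤ k := Nat.lt_succ_iff.1 (mem_range.1 hi)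
  rw [iterate_Dq_qPochInf_mul_qPochInf_apply hq hq1 a b i hx
      (ne_zero_of_dvd_ne_zero ha' (qPoch_dvd_qPoch q _ hik))
      (ne_zero_of_dvd_ne_zero hb' (qPoch_dvd_qPoch q _ hik)),
    iterate_Dq_inv_qPochInf_mul_inv_qPochInf_apply hq hq1 hx hc' hd' i (k - i)]
  ring
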